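/- Let M1 and M2 be subsequential string transducers over input alphabet Σ and output alphabet Γ, and let A_Up be a DFA over Σ recognizing the language Up. If ⟦M1⟧|_Up ≠ ⟦M2⟧|_Up, then there exists a word u∈Up with |u| ≤ 2·(|M1|·|M2|·|A_Up|)² such that ⟦M1⟧ and ⟦M2⟧ differ on u; that is, u belongs to exactly one of dom(⟦M1⟧) and dom(⟦M2⟧), or u belongs to both domains and ⟦M1⟧(u) ≠ ⟦M2⟧(u). -/

import Mathlib

attribute [local instance] Classical.propDecidable

/-- A subsequential string transducer with input alphabet `σ` and output alphabet `γ`. -/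
structure Transducer (σ : Type) (γ : Type) : Type 1 where
  Q : Type
  fin : Finite Q
  q0 : Q
  w0 : List γ
  δ : Q → σ → Option (Q × List γ)
  δF : Q → Option (List γ)

namespace Transducer

variable {σ γ : Type}

/-- The run relation `q →*^{u|w} q'`, as a function: from state `q`, reading `u`,
we reach the returned state producing the returned (concatenated) output. -/
def runFrom (M : Transducer σ γ) : M.Q → List σ → Option (M.Q × List γ)
  | q, [] => some (q, [])
  | q, a :: u =>
    (M.δ q a).bind fun x =>
      (M.runFrom x.1 u).map fun y => (y.1, x.2 ++ y.2)

/-- The semantics `⟦M⟧` of a transducer, as a partial function `Σ* → Γ*`. -/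
def sem (M : Transducer σ γ) (u : List σ) : Option (List γ) :=
  (M.runFrom M.q0 u).bind fun x => (M.δF x.1).map fun w' => M.w0 ++ x.2 ++ w'

/-- The number of states `|M|` of a transducer. -/
noncomputable def size (M : Transducer σ γ) : ℕ := Nat.card M.Q

/-- The run of `v` in `M` (from the initial state) uses the transition out of
state `q` reading letter `a`. -/
def usesTransition (M : Transducer σ γ) (q : M.Q) (a : σ) (v : List σ) : Prop :=
  ∃ (vp vs : List σ) (w : List γ), v = vp ++ a :: vs ∧ M.runFrom M.q0 vp = some (q, w)

/-- Modify the transition function of `M` at `(q, a)`: replace it by `o`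
(`o = none` deletes the transition, `o = some (q', w)` makes it `q →^{a|w} q'`). -/
noncomputable def modifyDelta (M : Transducer σ γ) (q : M.Q) (a : σ)
    (o : Option (M.Q × List γ)) : Transducer σ γ :=
  { M with δ := fun p b => if p = q ∧ b = a then o else M.δ p b }

/-- The product transducer `M × A` of a transducer and a DFA. -/
noncomputable def prodDFA {Q : Type} [Finite Q] (M : Transducer σ γ) (A : DFA σ Q) :
    Transducer σ γ where
  Q := M.Q × Q
  fin := by have := M.fin; infer_instance
  q0 := (M.q0, A.start)
  w0 := M.w0
  δ := fun qp a => (M.δ qp.1 a).map fun x => ((x.1, A.step qp.2 a), x.2)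
  δF := fun qp => if qp.2 ∈ A.accept then M.δF qp.1 else none

end Transducer

/-- A table entry: a word of `Γ*`, the wildcard `#`, or `⊥`. -/
inductive TVal (γ : Type) : Type where
  | word : List γ → TVal γ
  | hash : TVal γ
  | bot  : TVal γ

/-- An observation table for a target partial function `τ` with regular domain
upper bound `Up`, based on a finite prefix-closed set `P` and a finite
suffix-closed set `S` (both containing `ε`). -/
structure ObsTable (σ γ : Type) where
  P : Finset (List σ)
  S : Finset (List σ)
  eps_mem_P : ([] : List σ) ∈ P
  eps_mem_S : ([] : List σ) ∈ S
  prefixClosed : ∀ u ∈ P, ∀ v : List σ, v <+: u → v ∈ P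
  suffixClosed : ∀ u ∈ S, ∀ v : List σ, v <:+ u → v ∈ S
  Up : Language σ
  regular : ∃ (n : ℕ) (A : DFA σ (Fin n)), A.accepts = Up
  τ : List σ → Option (List γ)
  dom_subset : ∀ u : List σ, (τ u).isSome → u ∈ Up

namespace ObsTable

variable {σ γ : Type}

/-- The set `P ∪ PΣ`. -/
def rowIdx (T : ObsTable σ γ) : Set (List σ) :=
  ↑T.P ∪ {x | ∃ p ∈ T.P, ∃ a : σ, x = p ++ [a]}

/-- The set `(P ∪ PΣ)·S` on which the table is defined. -/
def rows (T : ObsTable σ γ) : Set (List σ) :=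
  {x | ∃ u ∈ T.rowIdx, ∃ v ∈ T.S, x = u ++ v}

/-- The table entry at `x`: `#` if `x ∉ Up`, `⊥` if `x ∈ Up ∖ dom τ`, and `τ x` otherwise. -/
noncomputable def val (T : ObsTable σ γ) (x : List σ) : TVal γ :=
  if x ∈ T.Up then
    match T.τ x with
    | some w => TVal.word w
    | none => TVal.bot
  else TVal.hash

/-- `P_T`: the set of prefixes of elements of `(P ∪ PΣ)·S`. -/
def PT (T : ObsTable σ γ) : Set (List σ) := {u | ∃ x ∈ T.rows, u <+: x}

/-- `P_Γ`: those `u ∈ P_T` having an extension whose table entry is a word of `Γ*`. -/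
def PGamma (T : ObsTable σ γ) : Set (List σ) :=
  {u | u ∈ T.PT ∧ ∃ v : List σ, u ++ v ∈ T.rows ∧ ∃ w, T.val (u ++ v) = TVal.word w}

/-- A transducer `M` is compatible with the table `T`. -/
def Compatible (T : ObsTable σ γ) (M : Transducer σ γ) : Prop :=
  ∀ x ∈ T.rows,
    (∀ w, T.val x = TVal.word w → M.sem x = some w) ∧
    (T.val x = TVal.bot → M.sem x = none)

lemma rowIdx_finite [Finite σ] (T : ObsTable σ γ) : T.rowIdx.Finite := by
  refine Set.Finite.union T.P.finite_toSet ?_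
  have h : {x : List σ | ∃ p ∈ T.P, ∃ a : σ, x = p ++ [a]}
      ⊆ (fun pa : List σ × σ => pa.1 ++ [pa.2]) '' ((↑T.P : Set (List σ)) ×ˢ (Set.univ : Set σ)) := by
    rintro x ⟨p, hp, a, rfl⟩
    exact ⟨(p, a), ⟨hp, trivial⟩, rfl⟩
  exact ((T.P.finite_toSet.prod Set.finite_univ).image _).subset h

lemma rows_finite [Finite σ] (T : ObsTable σ γ) : T.rows.Finite := by
  have h : T.rows ⊆ (fun uv : List σ × List σ => uv.1 ++ uv.2) '' (T.rowIdx ×ˢ (↑T.S : Set (List σ))) := by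
    rintro x ⟨u, hu, v, hv, rfl⟩
    exact ⟨(u, v), ⟨hu, hv⟩, rfl⟩
  exact (((rowIdx_finite T).prod T.S.finite_toSet).image _).subset h

lemma PT_finite [Finite σ] (T : ObsTable σ γ) : T.PT.Finite := by
  have h : T.PT ⊆ ⋃ x ∈ T.rows, {u : List σ | u ∈ x.inits} := by
    rintro u ⟨x, hx, hpre⟩
    exact Set.mem_biUnion hx (by simpa [List.mem_inits] using hpre)
  refine (Set.Finite.biUnion (rows_finite T) fun x _ => ?_).subset h
  exact x.inits.finite_toSet

end ObsTable

/-- A merging map `(≡, f)` on an observation table `T`. -/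
structure MergingMap {σ γ : Type} (T : ObsTable σ γ) where
  rel : List σ → List σ → Prop
  f : List σ → Option (List γ)
  rel_mem : ∀ u v : List σ, rel u v → u ∈ T.PT ∧ v ∈ T.PT
  rel_refl : ∀ u ∈ T.PT, rel u u
  rel_symm : ∀ {u v : List σ}, rel u v → rel v u
  rel_trans : ∀ {u v w : List σ}, rel u v → rel v w → rel u w
  f_mem : ∀ u : List σ, (f u).isSome → u ∈ T.PT
  cond1 : ∀ u v : List σ, f u = none → rel u v → f v = none
  cond2 : ∀ (u v : List σ) (w : List γ), u ∈ T.PT → u ++ v ∈ T.rows →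
    T.val (u ++ v) = TVal.word w → ∃ x, f u = some x ∧ x <+: w
  cond3 : ∀ (u : List σ) (a : σ) (w : List γ), f (u ++ [a]) = some w →
    ∃ x, f u = some x ∧ x <+: w
  cond4 : ∀ (u u' : List σ) (a : σ) (wu : List γ), f u = some wu → rel u u' →
    u ++ [a] ∈ T.PT → u' ++ [a] ∈ T.PT →
    rel (u ++ [a]) (u' ++ [a]) ∧
    ∀ wua, f (u ++ [a]) = some wua →
      ∃ (wu' x : List γ), f u' = some wu' ∧ wua = wu ++ x ∧ f (u' ++ [a]) = some (wu' ++ x)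
  cond5 : ∀ (u u' : List σ) (w : List γ), u ∈ T.rows → T.val u = TVal.word w → rel u u' →
    (u' ∈ T.rows → T.val u' ≠ TVal.bot) ∧
    ∀ w', u' ∈ T.rows → T.val u' = TVal.word w' →
      ∃ (x fu fu' : List γ), f u = some fu ∧ f u' = some fu' ∧ w = fu ++ x ∧ w' = fu' ++ x
  cond6 : ∀ (u : List σ) (a : σ), (f (u ++ [a])).isSome →
    (¬ ∃ v, rel u v ∧ v ++ [a] ∈ T.PGamma) → f (u ++ [a]) = f u

namespace MergingMap

variable {σ γ : Type} {T : ObsTable σ γ}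

/-- The `≡`-class of `u`. -/
def cls (m : MergingMap T) (u : List σ) : Set (List σ) := {v | m.rel u v}

/-- The set of `≡`-classes meeting `dom f`. -/
def classes (m : MergingMap T) : Set (Set (List σ)) :=
  {C | ∃ u : List σ, (m.f u).isSome ∧ C = m.cls u}

/-- The size of a merging map: the number of `≡`-classes meeting `dom f`. -/
noncomputable def size (m : MergingMap T) : ℕ := m.classes.ncard

lemma cls_mem_classes (m : MergingMap T) {u : List σ} (h : (m.f u).isSome) :
    m.cls u ∈ m.classes := ⟨u, h, rfl⟩

lemma classes_finite [Finite σ] (m : MergingMap T) : m.classes.Finite := by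
  have h : m.classes ⊆ m.cls '' T.PT := by
    rintro C ⟨u, hu, rfl⟩
    exact ⟨u, m.f_mem u hu, rfl⟩
  exact ((T.PT_finite).image _).subset h

/-- A muted pair `(u, a)` of a merging map. -/
def Muted (m : MergingMap T) (u : List σ) (a : σ) : Prop :=
  (m.f u).isSome ∧ (m.f (u ++ [a])).isSome ∧
    ¬ ∃ v, m.rel u v ∧ v ++ [a] ∈ T.PGamma

/-- An open end `(u, a)` of a merging map. -/
def OpenEnd (m : MergingMap T) (u : List σ) (a : σ) : Prop :=
  u ∈ T.PT ∧ ¬ ∃ v, m.rel u v ∧ v ++ [a] ∈ T.PT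

/-- The transducer resulting from a merging map (assuming `f ε` is defined,
so that the initial state exists). -/
noncomputable def resulting [Finite σ] (m : MergingMap T) (h0 : (m.f []).isSome) :
    Transducer σ γ where
  Q := {C : Set (List σ) // C ∈ m.classes}
  fin := m.classes_finite.to_subtype
  q0 := ⟨m.cls [], m.cls_mem_classes h0⟩
  w0 := (m.f []).get h0
  δ := fun q a =>
    if h : ∃ u : List σ, (m.f u).isSome ∧ (m.f (u ++ [a])).isSome ∧ q.1 = m.cls u then
      some (⟨m.cls (h.choose ++ [a]), m.cls_mem_classes h.choose_spec.2.1⟩,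
        ((m.f (h.choose ++ [a])).get h.choose_spec.2.1).drop
          ((m.f h.choose).get h.choose_spec.1).length)
    else none
  δF := fun q =>
    if h : ∃ u : List σ, (m.f u).isSome ∧ q.1 = m.cls u ∧ u ∈ T.rows ∧
        ∃ w, T.val u = TVal.word w then
      some (h.choose_spec.2.2.2.choose.drop ((m.f h.choose).get h.choose_spec.1).length)
    else none

/-- The state `q_u` of the resulting transducer associated with `u ∈ dom f`. -/
noncomputable def state [Finite σ] (m : MergingMap T) (h0 : (m.f []).isSome)
    {u : List σ} (h : (m.f u).isSome) : (m.resulting h0).Q :=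
  ⟨m.cls u, m.cls_mem_classes h⟩

/-- An open completion of a merging map, determined by a choice `g` of added
transitions (which, when used, must only be added at open ends, with output `ε`). -/
noncomputable def openCompletion [Finite σ] (m : MergingMap T) (h0 : (m.f []).isSome)
    (g : (m.resulting h0).Q → σ → Option ((m.resulting h0).Q)) : Transducer σ γ :=
  { m.resulting h0 with
    δ := fun q a =>
      match (m.resulting h0).δ q a with
      | some x => some x
      | none => (g q a).map fun q' => (q', ([] : List γ)) }

/-- The choice `g` of added transitions only adds transitions at open ends. -/
def ValidOpenChoice [Finite σ] (m : MergingMap T) (h0 : (m.f []).isSome)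
    (g : (m.resulting h0).Q → σ → Option ((m.resulting h0).Q)) : Prop :=
  ∀ (q : (m.resulting h0).Q) (a : σ), (g q a).isSome →
    ∃ u : List σ, q.1 = m.cls u ∧ m.OpenEnd u a

/-- The run of `x` in the open completion uses a muted or an open transition. -/
def usesMutedOrOpen [Finite σ] (m : MergingMap T) (h0 : (m.f []).isSome)
    (g : (m.resulting h0).Q → σ → Option ((m.resulting h0).Q)) (x : List σ) : Prop :=
  ∃ (vp : List σ) (a : σ) (vs : List σ) (q : (m.resulting h0).Q) (w : List γ),
    x = vp ++ a :: vs ∧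
    (m.openCompletion h0 g).runFrom (m.openCompletion h0 g).q0 vp = some (q, w) ∧
    ((∃ u, q.1 = m.cls u ∧ m.Muted u a) ∨ (m.resulting h0).δ q a = none)

end MergingMap

/-- The equivalence on `P_T` induced by a transducer: two words are related when
they reach the same state of `M` (or both fail to have a run). -/
def inducedRel {σ γ : Type} (M : Transducer σ γ) (T : ObsTable σ γ) (u v : List σ) : Prop :=
  u ∈ T.PT ∧ v ∈ T.PT ∧
    (M.runFrom M.q0 u).map Prod.fst = (M.runFrom M.q0 v).map Prod.fst

/-- Helper for the induced partial output function: walk through the word,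
appending the transition output only when the step leads into `P_Γ` for
some equivalent word. -/
noncomputable def goF {σ γ : Type} (M : Transducer σ γ) (T : ObsTable σ γ) :
    M.Q → List γ → List σ → Option (List γ)
  | _, acc, [] => some acc
  | q, acc, a :: rest =>
    (M.δ q a).bind fun x =>
      goF M T x.1
        (if ∃ v ∈ T.PT, (M.runFrom M.q0 v).map Prod.fst = some q ∧ v ++ [a] ∈ T.PGamma
          then acc ++ x.2 else acc) rest

/-- The partial output function induced by a transducer on `P_T`. -/
noncomputable def inducedF {σ γ : Type} (M : Transducer σ γ) (T : ObsTable σ γ)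
    (u : List σ) : Option (List γ) :=
  if u ∈ T.PT then goF M T M.q0 M.w0 u else none

/-!
Let `N = |M₁|·|M₂|·|A_Up|` and let `u ∈ Up` be a shortest word on which `⟦M₁⟧` and `⟦M₂⟧` differ;
we show `|u| < 2N`. Along `u` follow the joint state of `M₁`, `M₂` and `A_Up`, a stuck
transducer run counting as an extra state `none`.

If exactly one of `⟦M₁⟧ u`, `⟦M₂⟧ u` is defined, the run of the defined one never gets stuck, so
at most `2N` joint states occur; once `|u| ≥ 2N` some joint state repeats, and cutting out the
loop between the two occurrences gives a shorter word of `Up` with the same definedness pattern.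

If both are defined, no run gets stuck and there are only `N` joint states, so `|u| ≥ 2N` yields
two disjoint loops `u = x₁ y₁ x₂ y₂ z`. The two outputs then factor as `a g₁ b g₂ c` and
`a' g₁' b' g₂' c'`, the shorter words obtained by deleting `y₁`, `y₂` or both being mapped to the
same factorizations with the corresponding factors deleted. By minimality the two transducers
agree on these three words; then the offset `t` between `a` and `a'` satisfies `t g₁ = g₁' t`,
which forces `a g₁ b g₂ c = a' g₁' b' g₂' c'`.
-/

namespace List

variable {α : Type*}

theorem exists_eq_append_loop {T : Type*} (f : List α → T) {t : Set T} (ht : t.Finite)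
    {u : List α} (hlen : t.ncard ≤ u.length) (hf : ∀ v, v <+: u → f v ∈ t) :
    ∃ x y z, u = x ++ y ++ z ∧ y ≠ [] ∧ f x = f (x ++ y) := by
  obtain ⟨i, hi, j, hj, hij, hfij⟩ := Set.exists_ne_map_eq_of_ncard_lt_of_maps_to
    (s := ↑(Finset.range (u.length + 1))) (f := fun i => f (u.take i))
    (by simpa [Set.ncard_coe_finset] using Nat.lt_succ_of_le hlen)
    (fun i _ => hf _ (take_prefix i u)) ht
  wlog hlt : i < j generalizing i j
  · exact this j hj i hi hij.symm hfij.symm (by omega)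
  obtain ⟨k, hk, rfl⟩ : ∃ k, 0 < k ∧ j = i + k := ⟨j - i, by omega, by omega⟩
  have hju : i + k ≤ u.length := by simpa [Nat.lt_succ_iff] using hj
  refine ⟨u.take i, (u.drop i).take k, u.drop (i + k), ?_, ?_, ?_⟩
  · rw [← take_add, take_append_drop]
  · simp only [ne_eq, take_eq_nil_iff, drop_eq_nil_iff, not_or, not_le]
    omega
  · simpa [← take_add] using hfij

theorem exists_eq_append_two_loops {T : Type*} (f : List α → T) {t : Set T} (ht : t.Finite)
    {u : List α} (hlen : 2 * t.ncard ≤ u.length) (hf : ∀ v, v <+: u → f v ∈ t) :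
    ∃ x₁ y₁ x₂ y₂ z, u = x₁ ++ y₁ ++ x₂ ++ y₂ ++ z ∧ y₁ ≠ [] ∧ y₂ ≠ [] ∧
      f x₁ = f (x₁ ++ y₁) ∧ f (x₁ ++ y₁ ++ x₂) = f (x₁ ++ y₁ ++ x₂ ++ y₂) := by
  set n := t.ncard
  obtain ⟨x₁, y₁, z₁, hu₁, hy₁, hf₁⟩ := exists_eq_append_loop f ht (u := u.take n)
    (by simp only [length_take, le_inf_iff]; omega) fun v hv => hf v (hv.trans (take_prefix n u))
  obtain ⟨x₂, y₂, z, hu₂, hy₂, hf₂⟩ := exists_eq_append_loop (fun v => f (u.take n ++ v)) ht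
    (u := u.drop n) (by simp only [length_drop]; omega)
    fun v hv => hf _ (by simpa using (prefix_append_right_inj (u.take n)).2 hv)
  refine ⟨x₁, y₁, z₁ ++ x₂, y₂, z, ?_, hy₁, hy₂, hf₁, ?_⟩
  · rw [← take_append_drop n u, hu₁, hu₂]
    simp only [append_assoc]
  · simpa only [hu₁, append_assoc] using hf₂

theorem append_eq_of_deletions_eq {A₀ g₁ A₁ g₂ A₂ B₀ h₁ B₁ h₂ B₂ : List α}
    (e₁ : A₀ ++ A₁ ++ g₂ ++ A₂ = B₀ ++ B₁ ++ h₂ ++ B₂)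
    (e₂ : A₀ ++ g₁ ++ A₁ ++ A₂ = B₀ ++ h₁ ++ B₁ ++ B₂)
    (e₃ : A₀ ++ A₁ ++ A₂ = B₀ ++ B₁ ++ B₂) :
    A₀ ++ g₁ ++ A₁ ++ g₂ ++ A₂ = B₀ ++ h₁ ++ B₁ ++ h₂ ++ B₂ := by
  wlog hle : B₀.length ≤ A₀.length generalizing A₀ g₁ A₁ g₂ A₂ B₀ h₁ B₁ h₂ B₂
  · exact (this e₁.symm e₂.symm e₃.symm (by omega)).symm
  obtain ⟨t, rfl⟩ : B₀ <+: A₀ :=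
    prefix_of_prefix_length_le (l₃ := A₀ ++ (A₁ ++ A₂))
      (by rw [← append_assoc, e₃]; simp [append_assoc]) (prefix_append _ _) hle
  simp only [append_assoc, append_cancel_left_eq] at e₁ e₂ e₃ ⊢
  have hconj : t ++ g₁ = h₁ ++ t := by
    rw [← e₃, ← append_assoc, ← append_assoc] at e₂
    exact append_cancel_right (by simpa only [append_assoc] using e₂)
  rw [← append_assoc, hconj, append_assoc, e₁]

end List

namespace DFA

variable {α S : Type*} (D : DFA α S)

theorem eval_append_eq_of_eval_eq {x y : List α} (h : D.eval x = D.eval (x ++ y))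
    (z : List α) : D.eval (x ++ z) = D.eval (x ++ y ++ z) := by
  simp only [eval, evalFrom_of_append] at h ⊢
  rw [← h]

theorem mem_accepts_append_iff_of_eval_eq {x y : List α} (h : D.eval x = D.eval (x ++ y))
    (z : List α) : x ++ z ∈ D.accepts ↔ x ++ y ++ z ∈ D.accepts := by
  rw [mem_accepts, mem_accepts, D.eval_append_eq_of_eval_eq h]

theorem eval_deletions_of_eval_eq {x₁ y₁ x₂ y₂ z : List α}
    (h₁ : D.eval x₁ = D.eval (x₁ ++ y₁))
    (h₂ : D.eval (x₁ ++ y₁ ++ x₂) = D.eval (x₁ ++ y₁ ++ x₂ ++ y₂)) :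
    D.eval (x₁ ++ x₂ ++ y₂ ++ z) = D.eval (x₁ ++ y₁ ++ x₂ ++ y₂ ++ z) ∧
      D.eval (x₁ ++ y₁ ++ x₂ ++ z) = D.eval (x₁ ++ y₁ ++ x₂ ++ y₂ ++ z) ∧
      D.eval (x₁ ++ x₂ ++ z) = D.eval (x₁ ++ y₁ ++ x₂ ++ y₂ ++ z) := by
  have d₁ := fun w => by simpa only [List.append_assoc] using D.eval_append_eq_of_eval_eq h₁ w
  have d₂ := fun w => by simpa only [List.append_assoc] using D.eval_append_eq_of_eval_eq h₂ w
  simp only [List.append_assoc] at d₁ d₂ ⊢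
  exact ⟨d₁ _, d₂ _, (d₁ _).trans (d₂ _)⟩

end DFA

namespace Transducer

variable {σ γ : Type} (M : Transducer σ γ)

/-- The underlying automaton of `M`; the extra state `none` absorbs the runs that get stuck. -/
def toDFA : DFA σ (Option M.Q) where
  step q a := q.bind fun p => (M.δ p a).map Prod.fst
  start := some M.q0
  accept := {q | (q.bind M.δF).isSome}

theorem toDFA_evalFrom_none (u : List σ) : M.toDFA.evalFrom none u = none := by
  induction u with
  | nil => rfl
  | cons a u ih => exact ih

theorem toDFA_evalFrom_some (q : M.Q) (u : List σ) :
    M.toDFA.evalFrom (some q) u = (M.runFrom q u).map Prod.fst := by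
  induction u generalizing q with
  | nil => rfl
  | cons a u ih =>
    have hstep : M.toDFA.step (some q) a = (M.δ q a).map Prod.fst := rfl
    rw [DFA.evalFrom_cons, hstep]
    cases h : M.δ q a with
    | none => simp [runFrom, h, toDFA_evalFrom_none]
    | some x => simp [runFrom, h, ih, Option.map_map, Function.comp_def]

theorem toDFA_eval (u : List σ) : M.toDFA.eval u = (M.runFrom M.q0 u).map Prod.fst :=
  M.toDFA_evalFrom_some M.q0 u

theorem mem_toDFA_accepts {u : List σ} : u ∈ M.toDFA.accepts ↔ (M.sem u).isSome := by
  rw [DFA.mem_accepts, toDFA_eval]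
  cases h : M.runFrom M.q0 u <;> simp [toDFA, sem, h]

theorem runFrom_append (q : M.Q) (u v : List σ) :
    M.runFrom q (u ++ v) = (M.runFrom q u).bind
      fun x => (M.runFrom x.1 v).map fun y => (y.1, x.2 ++ y.2) := by
  induction u generalizing q with
  | nil => simp [runFrom]
  | cons a u ih =>
    cases h : M.δ q a with
    | none => simp [runFrom, h]
    | some x =>
      simp only [List.cons_append, runFrom, h, Option.bind_some, ih]
      cases M.runFrom x.1 u <;> simp [Option.map_map, Function.comp_def]

variable {M}

theorem runFrom_append_eq_some_iff {q r : M.Q} {u v : List σ} {w : List γ} :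
    M.runFrom q (u ++ v) = some (r, w) ↔
      ∃ p w₁ w₂, M.runFrom q u = some (p, w₁) ∧ M.runFrom p v = some (r, w₂) ∧
        w = w₁ ++ w₂ := by
  rw [runFrom_append]
  constructor
  · intro h
    simp only [Option.bind_eq_some_iff, Option.map_eq_some_iff] at h
    aesop
  · rintro ⟨p, w₁, w₂, h₁, h₂, rfl⟩
    simp [h₁, h₂]

theorem exists_toDFA_eval_eq_some_of_prefix {u v : List σ} (hv : v <+: u)
    (hu : (M.sem u).isSome) : ∃ p, M.toDFA.eval v = some p := by
  obtain ⟨t, rfl⟩ := hv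
  rw [← mem_toDFA_accepts, DFA.mem_accepts, DFA.eval, DFA.evalFrom_of_append] at hu
  rw [← Option.isSome_iff_exists, Option.isSome_iff_ne_none]
  intro h
  rw [DFA.eval] at h
  rw [h, toDFA_evalFrom_none] at hu
  simp [toDFA] at hu

theorem sem_eq_some_iff {u : List σ} {w : List γ} :
    M.sem u = some w ↔
      ∃ q r f, M.runFrom M.q0 u = some (q, r) ∧ M.δF q = some f ∧ w = M.w0 ++ r ++ f := by
  simp only [sem, Option.bind_eq_some_iff, Option.map_eq_some_iff]
  aesop

theorem state_eq_of_toDFA_eval_eq {x y : List σ} {p p' : M.Q} {w w' : List γ}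
    (h : M.toDFA.eval x = M.toDFA.eval y) (hx : M.runFrom M.q0 x = some (p, w))
    (hy : M.runFrom M.q0 y = some (p', w')) : p = p' := by
  simpa [toDFA_eval, hx, hy] using h

theorem sem_deletions_of_toDFA_eval_eq {x₁ y₁ x₂ y₂ z : List σ} {w : List γ}
    (hw : M.sem (x₁ ++ y₁ ++ x₂ ++ y₂ ++ z) = some w)
    (h₁ : M.toDFA.eval x₁ = M.toDFA.eval (x₁ ++ y₁))
    (h₂ : M.toDFA.eval (x₁ ++ y₁ ++ x₂) = M.toDFA.eval (x₁ ++ y₁ ++ x₂ ++ y₂)) :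
    ∃ a g₁ b g₂ c, w = a ++ g₁ ++ b ++ g₂ ++ c ∧
      M.sem (x₁ ++ x₂ ++ y₂ ++ z) = some (a ++ b ++ g₂ ++ c) ∧
      M.sem (x₁ ++ y₁ ++ x₂ ++ z) = some (a ++ g₁ ++ b ++ c) ∧
      M.sem (x₁ ++ x₂ ++ z) = some (a ++ b ++ c) := by
  obtain ⟨qf, r, f, hr, hf, rfl⟩ := sem_eq_some_iff.1 hw
  obtain ⟨p₂', r₄, c, hr₄, hc, rfl⟩ := runFrom_append_eq_some_iff.1 hr
  obtain ⟨p₂, r₃, g₂, hr₃, hg₂, rfl⟩ := runFrom_append_eq_some_iff.1 hr₄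
  obtain ⟨p₁', r₂, b, hr₂, hb, rfl⟩ := runFrom_append_eq_some_iff.1 hr₃
  obtain ⟨p₁, a, g₁, ha, hg₁, rfl⟩ := runFrom_append_eq_some_iff.1 hr₂
  obtain rfl := state_eq_of_toDFA_eval_eq h₁ ha hr₂
  obtain rfl := state_eq_of_toDFA_eval_eq h₂ hr₃ hr₄
  have run {q q' q'' : M.Q} {u v : List σ} {w w' : List γ}
      (h : M.runFrom q u = some (q', w)) (h' : M.runFrom q' v = some (q'', w')) :
      M.runFrom q (u ++ v) = some (q'', w ++ w') :=
    runFrom_append_eq_some_iff.2 ⟨q', w, w', h, h', rfl⟩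
  have sem_eq {u : List σ} {r : List γ} (h : M.runFrom M.q0 u = some (qf, r)) :
      M.sem u = some (M.w0 ++ r ++ f) :=
    sem_eq_some_iff.2 ⟨qf, r, f, h, hf, rfl⟩
  refine ⟨M.w0 ++ a, g₁, b, g₂, c ++ f, by simp, ?_, ?_, ?_⟩
  · simpa using sem_eq (run (run (run ha hb) hg₂) hc)
  · simpa using sem_eq (run (run (run ha hg₁) hb) hc)
  · simpa using sem_eq (run (run ha hb) hc)

section Witness

variable {QA : Type} (M₁ M₂ : Transducer σ γ) (A : DFA σ QA)

def jointEval (v : List σ) : Option M₁.Q × Option M₂.Q × QA :=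
  (M₁.toDFA.eval v, M₂.toDFA.eval v, A.eval v)

variable {M₁ M₂ A} [Finite QA]

theorem exists_shorter_of_sem_eq_none {u : List σ} (hu : u ∈ A.accepts)
    (h₁ : M₁.sem u = none) (h₂ : (M₂.sem u).isSome)
    (hlen : 2 * (M₁.size * M₂.size * Nat.card QA) ≤ u.length) :
    ∃ v ∈ A.accepts, M₁.sem v = none ∧ (M₂.sem v).isSome ∧ v.length < u.length := by
  have := M₁.fin
  have := M₂.fin
  let e (p : Option M₁.Q × M₂.Q × QA) : Option M₁.Q × Option M₂.Q × QA := (p.1, some p.2.1, p.2.2)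
  have hcard : (Set.range e).ncard ≤ 2 * (M₁.size * M₂.size * Nat.card QA) := by
    rw [Set.ncard_range_of_injective (by rintro ⟨_, _, _⟩ ⟨_, _, _⟩ h; simpa [e] using h)]
    have : 0 < M₁.size := @Nat.card_pos _ ⟨M₁.q0⟩ _
    simp only [Nat.card_prod, Finite.card_option, size] at this ⊢
    calc (Nat.card M₁.Q + 1) * (Nat.card M₂.Q * Nat.card QA)
        ≤ (2 * Nat.card M₁.Q) * (Nat.card M₂.Q * Nat.card QA) := by gcongr; omega
      _ = _ := by ring
  obtain ⟨x, y, z, rfl, hy, hloop⟩ := List.exists_eq_append_loop (jointEval M₁ M₂ A)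
    (Set.finite_range e) (hcard.trans hlen) fun v hv => by
      obtain ⟨p, hp⟩ := exists_toDFA_eval_eq_some_of_prefix hv h₂
      exact ⟨(M₁.toDFA.eval v, p, A.eval v), by simp [e, jointEval, hp]⟩
  simp only [jointEval, Prod.mk.injEq] at hloop
  obtain ⟨l₁, l₂, lA⟩ := hloop
  refine ⟨x ++ z, (A.mem_accepts_append_iff_of_eval_eq lA z).2 hu, ?_, ?_, ?_⟩
  · rwa [← Option.not_isSome_iff_eq_none, ← mem_toDFA_accepts,
      M₁.toDFA.mem_accepts_append_iff_of_eval_eq l₁, mem_toDFA_accepts,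
      Option.not_isSome_iff_eq_none]
  · rwa [← mem_toDFA_accepts, M₂.toDFA.mem_accepts_append_iff_of_eval_eq l₂, mem_toDFA_accepts]
  · simp only [List.length_append]
    have := List.length_pos_of_ne_nil hy
    omega

theorem exists_shorter_of_sem_eq_some {u : List σ} {w₁ w₂ : List γ} (hu : u ∈ A.accepts)
    (h₁ : M₁.sem u = some w₁) (h₂ : M₂.sem u = some w₂) (hne : w₁ ≠ w₂)
    (hlen : 2 * (M₁.size * M₂.size * Nat.card QA) ≤ u.length) :
    ∃ v ∈ A.accepts, M₁.sem v ≠ M₂.sem v ∧ v.length < u.length := by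
  have := M₁.fin
  have := M₂.fin
  have hd₁ : (M₁.sem u).isSome := by simp [h₁]
  have hd₂ : (M₂.sem u).isSome := by simp [h₂]
  by_contra! hmin
  let e (p : M₁.Q × M₂.Q × QA) : Option M₁.Q × Option M₂.Q × QA := (some p.1, some p.2.1, p.2.2)
  have hcard : (Set.range e).ncard = M₁.size * M₂.size * Nat.card QA := by
    rw [Set.ncard_range_of_injective (by rintro ⟨_, _, _⟩ ⟨_, _, _⟩ h; simpa [e] using h)]
    simp only [Nat.card_prod, size, mul_assoc]
  obtain ⟨x₁, y₁, x₂, y₂, z, rfl, hy₁, hy₂, l₁, l₂⟩ := List.exists_eq_append_two_loops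
    (jointEval M₁ M₂ A) (Set.finite_range e) (hcard ▸ hlen) fun v hv => by
      obtain ⟨p₁, hp₁⟩ := exists_toDFA_eval_eq_some_of_prefix hv hd₁
      obtain ⟨p₂, hp₂⟩ := exists_toDFA_eval_eq_some_of_prefix hv hd₂
      exact ⟨(p₁, p₂, A.eval v), by simp [e, jointEval, hp₁, hp₂]⟩
  simp only [jointEval, Prod.mk.injEq] at l₁ l₂
  obtain ⟨a, g₁, b, g₂, c, rfl, s₁, s₂, s₃⟩ := sem_deletions_of_toDFA_eval_eq h₁ l₁.1 l₂.1
  obtain ⟨a', g₁', b', g₂', c', rfl, s₁', s₂', s₃'⟩ :=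
    sem_deletions_of_toDFA_eval_eq h₂ l₁.2.1 l₂.2.1
  obtain ⟨d₁, d₂, d₃⟩ := A.eval_deletions_of_eval_eq (z := z) l₁.2.2 l₂.2.2
  have agree {v : List σ} (hv : A.eval v = A.eval (x₁ ++ y₁ ++ x₂ ++ y₂ ++ z))
      (hlt : v.length < (x₁ ++ y₁ ++ x₂ ++ y₂ ++ z).length) : M₁.sem v = M₂.sem v := by
    by_contra h
    exact (hmin v (by rwa [DFA.mem_accepts, hv]) h).not_gt hlt
  have := List.length_pos_of_ne_nil hy₁
  have := List.length_pos_of_ne_nil hy₂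
  refine hne (List.append_eq_of_deletions_eq ?_ ?_ ?_) <;> refine Option.some.inj ?_
  · rw [← s₁, ← s₁']
    exact agree d₁ (by simp only [List.length_append]; omega)
  · rw [← s₂, ← s₂']
    exact agree d₂ (by simp only [List.length_append]; omega)
  · rw [← s₃, ← s₃']
    exact agree d₃ (by simp only [List.length_append]; omega)

theorem exists_shorter_witness {u : List σ} (hu : u ∈ A.accepts) (hne : M₁.sem u ≠ M₂.sem u)
    (hlen : 2 * (M₁.size * M₂.size * Nat.card QA) ≤ u.length) :
    ∃ v ∈ A.accepts, M₁.sem v ≠ M₂.sem v ∧ v.length < u.length := by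
  rcases h₁ : M₁.sem u with _ | w₁ <;> rcases h₂ : M₂.sem u with _ | w₂
  · exact absurd (h₁.trans h₂.symm) hne
  · obtain ⟨v, hv, hv₁, hv₂, hlt⟩ := exists_shorter_of_sem_eq_none hu h₁ (by rw [h₂]; rfl) hlen
    exact ⟨v, hv, fun h => by simp [← h, hv₁] at hv₂, hlt⟩
  · obtain ⟨v, hv, hv₂, hv₁, hlt⟩ := exists_shorter_of_sem_eq_none hu h₂ (by rw [h₁]; rfl)
      (by rwa [mul_comm M₂.size])
    exact ⟨v, hv, fun h => by simp [h, hv₂] at hv₁, hlt⟩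
  · exact exists_shorter_of_sem_eq_some hu h₁ h₂ (fun h => hne (by rw [h₁, h₂, h])) hlen

theorem exists_witness_length_lt {u : List σ} (hu : u ∈ A.accepts) (hne : M₁.sem u ≠ M₂.sem u) :
    ∃ v ∈ A.accepts, M₁.sem v ≠ M₂.sem v ∧ v.length < 2 * (M₁.size * M₂.size * Nat.card QA) := by
  induction hn : u.length using Nat.strong_induction_on generalizing u with
  | _ n ih =>
    by_cases hlen : u.length < 2 * (M₁.size * M₂.size * Nat.card QA)
    · exact ⟨u, hu, hne, hlen⟩
    · obtain ⟨v, hv, hvne, hlt⟩ := exists_shorter_witness hu hne (not_lt.1 hlen)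
      exact ih _ (hn ▸ hlt) hv hvne rfl

end Witness

end Transducer

theorem small_difference_witness_general {σ γ QA : Type} [Finite QA]
    (M1 M2 : Transducer σ γ) (A : DFA σ QA)
    (h : ∃ y ∈ A.accepts, M1.sem y ≠ M2.sem y) :
    ∃ u ∈ A.accepts,
      u.length ≤ 2 * (M1.size * M2.size * Nat.card QA) ^ 2 ∧
      (((M1.sem u).isSome ∧ M2.sem u = none) ∨
       (M1.sem u = none ∧ (M2.sem u).isSome) ∨
       (∃ w1 w2 : List γ, M1.sem u = some w1 ∧ M2.sem u = some w2 ∧ w1 ≠ w2)) := by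
  obtain ⟨y, hy, hne⟩ := h
  obtain ⟨u, hu, hne, hlt⟩ := Transducer.exists_witness_length_lt hy hne
  refine ⟨u, hu, ?_, ?_⟩
  · calc u.length ≤ 2 * (M1.size * M2.size * Nat.card QA) := hlt.le
      _ ≤ 2 * (M1.size * M2.size * Nat.card QA) ^ 2 := by
        gcongr
        exact Nat.le_self_pow two_ne_zero _
  · rcases h₁ : M1.sem u with _ | w₁ <;> rcases h₂ : M2.sem u with _ | w₂
    · exact absurd (h₁.trans h₂.symm) hne
    · simp
    · simp
    · exact Or.inr (Or.inr ⟨w₁, w₂, rfl, rfl, fun h => hne (by rw [h₁, h₂, h])⟩)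

/-- If `⟦M1⟧` and `⟦M2⟧` differ somewhere on `Up = L(A_Up)`, then
they differ on a word `u ∈ Up` with `|u| ≤ 2·(|M1|·|M2|·|A_Up|)²`. -/
theorem small_difference_witness {σ γ QA : Type} [Finite σ] [Finite γ] [Finite QA]
    (M1 M2 : Transducer σ γ) (A : DFA σ QA)
    (h : ∃ y ∈ A.accepts, M1.sem y ≠ M2.sem y) :
    ∃ u ∈ A.accepts,
      u.length ≤ 2 * (M1.size * M2.size * Nat.card QA) ^ 2 ∧
      (((M1.sem u).isSome ∧ M2.sem u = none) ∨
       (M1.sem u = none ∧ (M2.sem u).isSome) ∨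
       (∃ w1 w2 : List γ, M1.sem u = some w1 ∧ M2.sem u = some w2 ∧ w1 ≠ w2)) :=
  small_difference_witness_general M1 M2 A h
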